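/- arXiv:0712.2597 — 2 statements merged into one kernel-verified Lean document; each statement's English description precedes it below -/
import Mathlib

section
/- Lindström–Gessel–Viennot lemma: let N be a finite acyclic planar weighted directed graph with sources b_1,…,b_n followed by sinks c_1,…,c_n in order along the boundary, and let X be the n×n matrix with X_{ij} equal to the sum of weights of directed paths from b_i to c_j. Then det(X) equals the sum over all families (p_1,…,p_n) of pairwise vertex-disjoint paths with p_i from b_i to c_i of the product of the weights of the paths. -/
/-- `l` is a directed path from `a` to `b` in the digraph with edge relation `E`:
consecutive vertices are joined by edges, it starts at `a`, ends at `b`, and (being a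
path in an acyclic digraph) has no repeated vertices. -/
def IsPath {V : Type*} (E : V → V → Prop) (a b : V) (l : List V) : Prop :=
  l.Chain' E ∧ l.head? = some a ∧ l.getLast? = some b ∧ l.Nodup

/-- The weight of a path: the product of the weights of its edges. -/
def pathWeight {V R : Type*} [CommRing R] (wt : V → V → R) (l : List V) : R :=
  ((l.zip l.tail).map fun p => wt p.1 p.2).prod

/-- A family of paths is (vertex-)disjoint if no two distinct members share a vertex. -/
def PairwiseDisjointPaths {V : Type*} {n : ℕ} (P : Fin n → List V) : Prop :=
  ∀ i j : Fin n, i ≠ j → ∀ v : V, v ∈ P i → v ∉ P j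

/-! Expanding the determinant and each entry `X i (σ i)` writes `det X` as a signed sum over pairs
`(σ, P)` of a permutation and a family of paths `P k : b k → c (σ k)`. On the families that are
not vertex-disjoint, swapping the tails of `P i` and `P j` after their *first crossing* — `i` the
least index whose path meets another one, `v` the first vertex of `P i` lying on another path,
`j` the least index `≠ i` of a path through `v` — is an involution: it keeps the first crossing,
preserves the total weight and flips the sign of `σ`, and by acyclicity the spliced walks are again
paths. Those terms cancel, and by planarity the remaining disjoint families all have `σ = 1`. -/

namespace LGV

variable {V : Type*}

section Split

variable [DecidableEq V] {v w a : V} {l t r : List V}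

def prefixBefore (v : V) (l : List V) : List V := l.takeWhile (· ≠ v)

def suffixFrom (v : V) (l : List V) : List V := l.dropWhile (· ≠ v)

@[simp]
lemma prefixBefore_cons_self : prefixBefore v (v :: l) = [] := by
  simp [prefixBefore]

lemma prefixBefore_cons_of_ne (h : a ≠ v) : prefixBefore v (a :: l) = a :: prefixBefore v l := by
  simp [prefixBefore, h]

@[simp]
lemma suffixFrom_cons_self : suffixFrom v (v :: l) = v :: l := by
  simp [suffixFrom]

lemma suffixFrom_cons_of_ne (h : a ≠ v) : suffixFrom v (a :: l) = suffixFrom v l := by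
  simp [suffixFrom, h]

lemma prefixBefore_append_suffixFrom (v : V) (l : List V) :
    prefixBefore v l ++ suffixFrom v l = l :=
  List.takeWhile_append_dropWhile

lemma prefixBefore_subset (v : V) (l : List V) : prefixBefore v l ⊆ l :=
  (List.takeWhile_sublist _).subset

lemma suffixFrom_subset (v : V) (l : List V) : suffixFrom v l ⊆ l :=
  (List.dropWhile_sublist _).subset

lemma notMem_prefixBefore (v : V) (l : List V) : v ∉ prefixBefore v l := fun h => by
  simpa using List.mem_takeWhile_imp h

lemma prefixBefore_append_cons (h : v ∉ t) : prefixBefore v (t ++ v :: r) = t := by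
  induction t with
  | nil => simp
  | cons a t ih =>
    rw [List.mem_cons, not_or] at h
    rw [List.cons_append, prefixBefore_cons_of_ne (Ne.symm h.1), ih h.2]

lemma suffixFrom_append_cons (h : v ∉ t) : suffixFrom v (t ++ v :: r) = v :: r := by
  induction t with
  | nil => simp
  | cons a t ih =>
    rw [List.mem_cons, not_or] at h
    rw [List.cons_append, suffixFrom_cons_of_ne (Ne.symm h.1), ih h.2]

lemma exists_eq_prefixBefore_append_cons (hv : v ∈ l) :
    ∃ r, l = prefixBefore v l ++ v :: r ∧ suffixFrom v l = v :: r := by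
  induction l with
  | nil => simp at hv
  | cons a l ih =>
    by_cases hav : a = v
    · subst hav
      simp
    · obtain ⟨r, hl, hs⟩ := ih ((List.mem_cons.mp hv).resolve_left (Ne.symm hav))
      refine ⟨r, ?_, by rw [suffixFrom_cons_of_ne hav, hs]⟩
      rw [prefixBefore_cons_of_ne hav, List.cons_append, ← hl]

lemma prefixBefore_prefixBefore_append_suffixFrom (l : List V) {l' : List V} (hv : v ∈ l') :
    prefixBefore v (prefixBefore v l ++ suffixFrom v l') = prefixBefore v l := by
  obtain ⟨r, -, hs⟩ := exists_eq_prefixBefore_append_cons hv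
  rw [hs, prefixBefore_append_cons (notMem_prefixBefore v l)]

lemma suffixFrom_prefixBefore_append_suffixFrom (l : List V) {l' : List V} (hv : v ∈ l') :
    suffixFrom v (prefixBefore v l ++ suffixFrom v l') = suffixFrom v l' := by
  obtain ⟨r, -, hs⟩ := exists_eq_prefixBefore_append_cons hv
  rw [hs, suffixFrom_append_cons (notMem_prefixBefore v l)]

lemma mem_suffixFrom (hv : v ∈ l) : v ∈ suffixFrom v l := by
  obtain ⟨r, -, hs⟩ := exists_eq_prefixBefore_append_cons hv
  simp [hs]

lemma eq_of_notMem_prefixBefore (hv : v ∈ l) (hw : w ∈ l) (hvw : v ∉ prefixBefore w l)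
    (hwv : w ∉ prefixBefore v l) : v = w := by
  induction l with
  | nil => simp at hv
  | cons a l ih =>
    by_cases hav : a = v
    · subst hav
      by_contra hne
      exact hvw (by simp [prefixBefore_cons_of_ne hne])
    by_cases haw : a = w
    · subst haw
      exact absurd (by simp [prefixBefore_cons_of_ne hav]) hwv
    rw [prefixBefore_cons_of_ne haw, List.mem_cons, not_or] at hvw
    rw [prefixBefore_cons_of_ne hav, List.mem_cons, not_or] at hwv
    exact ih ((List.mem_cons.mp hv).resolve_left (Ne.symm hav))
      ((List.mem_cons.mp hw).resolve_left (Ne.symm haw)) hvw.2 hwv.2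

lemma exists_mem_forall_prefixBefore_not (Q : V → Prop) (h : ∃ w ∈ l, Q w) :
    ∃ v ∈ l, Q v ∧ ∀ w ∈ prefixBefore v l, ¬ Q w := by
  induction l with
  | nil => simp at h
  | cons a l ih =>
    by_cases ha : Q a
    · exact ⟨a, List.mem_cons_self, ha, by simp⟩
    obtain ⟨v, hv, hQv, hpre⟩ := ih (by simpa [ha] using h)
    have hav : a ≠ v := fun hav => ha (hav ▸ hQv)
    refine ⟨v, List.mem_cons_of_mem a hv, hQv, ?_⟩
    rw [prefixBefore_cons_of_ne hav]
    simpa [ha] using hpre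

end Split

section Paths

variable {E : V → V → Prop}

lemma IsPath.nodup {a b : V} {l : List V} (h : IsPath E a b l) : l.Nodup :=
  h.2.2.2

lemma nodup_of_isChain (hacyc : ¬ ∃ v : V, Relation.TransGen E v v) {l : List V}
    (hl : l.IsChain E) : l.Nodup := by
  rw [List.nodup_iff_sublist]
  intro a hsub
  have hchain := (hl.imp fun _ _ => Relation.TransGen.single).sublist hsub
  exact hacyc ⟨a, (List.isChain_cons_cons.mp hchain).1⟩

lemma IsPath.splice (hacyc : ¬ ∃ v : V, Relation.TransGen E v v) {a b a' b' v : V}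
    {t r t' r' : List V} (h : IsPath E a b (t ++ v :: r)) (h' : IsPath E a' b' (t' ++ v :: r')) :
    IsPath E a b' (t ++ v :: r') := by
  obtain ⟨hc, hh, -, -⟩ := h
  obtain ⟨hc', -, hl', -⟩ := h'
  replace hc : (t ++ v :: r).IsChain E := hc
  replace hc' : (t' ++ v :: r').IsChain E := hc'
  have hchain : (t ++ v :: r').IsChain E := by
    rw [List.isChain_append] at hc hc' ⊢
    exact ⟨hc.1, hc'.2.1, by simpa using hc.2.2⟩
  refine ⟨hchain, ?_, ?_, nodup_of_isChain hacyc hchain⟩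
  · cases t <;> simpa using hh
  · simpa [List.getLast?_append_cons] using hl'

lemma setOf_isPath_finite [Fintype V] (E : V → V → Prop) (a b : V) :
    {l : List V | IsPath E a b l}.Finite :=
  (List.finite_length_le V (Fintype.card V)).subset fun _ hl => (IsPath.nodup hl).length_le_card

end Paths

lemma pathWeight_append_cons {R : Type*} [CommRing R] (wt : V → V → R) (t : List V) (v : V)
    (r : List V) :
    pathWeight wt (t ++ v :: r) = pathWeight wt (t ++ [v]) * pathWeight wt (v :: r) := by
  induction t with
  | nil => simp [pathWeight]
  | cons a t ih =>
    cases t with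
    | nil => simp [pathWeight]
    | cons a' t => simp_all [pathWeight, mul_assoc]

lemma pathWeight_splice_mul {R : Type*} [CommRing R] (wt : V → V → R) (t r t' r' : List V)
    (v : V) :
    pathWeight wt (t ++ v :: r') * pathWeight wt (t' ++ v :: r) =
      pathWeight wt (t ++ v :: r) * pathWeight wt (t' ++ v :: r') := by
  rw [pathWeight_append_cons wt t v r', pathWeight_append_cons wt t' v r,
    pathWeight_append_cons wt t v r, pathWeight_append_cons wt t' v r']
  ring

section Crossing

variable [DecidableEq V] {n : ℕ} {P : Fin n → List V} {i j i' j' : Fin n} {v v' : V}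

structure IsFirstCrossing (P : Fin n → List V) (i : Fin n) (v : V) (j : Fin n) : Prop where
  ne : j ≠ i
  mem_left : v ∈ P i
  mem_right : v ∈ P j
  disjoint_of_lt : ∀ k < i, ∀ k', k' ≠ k → ∀ w ∈ P k, w ∉ P k'
  notMem_of_mem_prefixBefore : ∀ w ∈ prefixBefore v (P i), ∀ k, k ≠ i → w ∉ P k
  notMem_of_lt : ∀ k < j, k ≠ i → v ∉ P k

lemma IsFirstCrossing.not_pairwiseDisjointPaths (h : IsFirstCrossing P i v j) :
    ¬ PairwiseDisjointPaths P :=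
  fun hP => hP j i h.ne v h.mem_right h.mem_left

lemma IsFirstCrossing.lt (h : IsFirstCrossing P i v j) : i < j := by
  refine lt_of_le_of_ne (not_lt.mp fun hji => ?_) h.ne.symm
  exact h.disjoint_of_lt j hji i h.ne.symm v h.mem_right h.mem_left

lemma exists_isFirstCrossing (h : ¬ PairwiseDisjointPaths P) :
    ∃ i v j, IsFirstCrossing P i v j := by
  simp only [PairwiseDisjointPaths, not_forall, not_not] at h
  obtain ⟨i₀, j₀, hij₀, v₀, hv₀i, hv₀j⟩ := h
  obtain ⟨i, ⟨j₁, hj₁, v₁, hv₁i, hv₁j⟩, hi_min⟩ :=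
    wellFounded_lt.has_min {i | ∃ j ≠ i, ∃ v ∈ P i, v ∈ P j} ⟨i₀, j₀, hij₀.symm, v₀, hv₀i, hv₀j⟩
  obtain ⟨v, hvi, ⟨j₂, hj₂, hvj₂⟩, hv_first⟩ :=
    exists_mem_forall_prefixBefore_not (fun w => ∃ j ≠ i, w ∈ P j) ⟨v₁, hv₁i, j₁, hj₁, hv₁j⟩
  obtain ⟨j, ⟨hji, hvj⟩, hj_min⟩ := wellFounded_lt.has_min {j | j ≠ i ∧ v ∈ P j} ⟨j₂, hj₂, hvj₂⟩
  exact ⟨i, v, j, hji, hvi, hvj, fun k hk k' hk' w hwk hwk' => hi_min k ⟨k', hk', w, hwk, hwk'⟩ hk,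
    fun w hw k hk hwk => hv_first w hw ⟨k, hk, hwk⟩, fun k hk hki hvk => hj_min k ⟨hki, hvk⟩ hk⟩

lemma IsFirstCrossing.unique (h : IsFirstCrossing P i v j) (h' : IsFirstCrossing P i' v' j') :
    i = i' ∧ v = v' ∧ j = j' := by
  obtain rfl : i = i' := by
    by_contra hne
    rcases lt_or_gt_of_ne hne with hlt | hlt
    · exact h'.disjoint_of_lt i hlt j h.ne v h.mem_left h.mem_right
    · exact h.disjoint_of_lt i' hlt j' h'.ne v' h'.mem_left h'.mem_right
  obtain rfl : v = v' := eq_of_notMem_prefixBefore h.mem_left h'.mem_left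
    (fun hv => h'.notMem_of_mem_prefixBefore v hv j h.ne h.mem_right)
    (fun hv => h.notMem_of_mem_prefixBefore v' hv j' h'.ne h'.mem_right)
  refine ⟨rfl, rfl, ?_⟩
  by_contra hne
  rcases lt_or_gt_of_ne hne with hlt | hlt
  · exact h'.notMem_of_lt j hlt h.ne h.mem_right
  · exact h.notMem_of_lt j' hlt h'.ne h'.mem_right

def swapTails (P : Fin n → List V) (i : Fin n) (v : V) (j : Fin n) : Fin n → List V :=
  Function.update (Function.update P i (prefixBefore v (P i) ++ suffixFrom v (P j))) j
    (prefixBefore v (P j) ++ suffixFrom v (P i))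

lemma swapTails_apply_left (hij : i ≠ j) :
    swapTails P i v j i = prefixBefore v (P i) ++ suffixFrom v (P j) := by
  rw [swapTails, Function.update_of_ne hij, Function.update_self]

lemma swapTails_apply_right :
    swapTails P i v j j = prefixBefore v (P j) ++ suffixFrom v (P i) := by
  rw [swapTails, Function.update_self]

lemma swapTails_apply_of_ne {k : Fin n} (hki : k ≠ i) (hkj : k ≠ j) : swapTails P i v j k = P k := by
  rw [swapTails, Function.update_of_ne hkj, Function.update_of_ne hki]

lemma mem_swapTails {k : Fin n} {w : V} (hij : i ≠ j) (hw : w ∈ swapTails P i v j k) :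
    w ∈ P k ∨ w ∈ P i ∨ w ∈ P j := by
  rcases eq_or_ne k i with rfl | hki
  · rw [swapTails_apply_left hij, List.mem_append] at hw
    exact hw.imp (prefixBefore_subset v _ ·) (fun h => .inr (suffixFrom_subset v _ h))
  rcases eq_or_ne k j with rfl | hkj
  · rw [swapTails_apply_right, List.mem_append] at hw
    exact hw.imp (prefixBefore_subset v _ ·) (fun h => .inl (suffixFrom_subset v _ h))
  · rw [swapTails_apply_of_ne hki hkj] at hw
    exact .inl hw

lemma swapTails_swapTails (hij : i ≠ j) (hvi : v ∈ P i) (hvj : v ∈ P j) :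
    swapTails (swapTails P i v j) i v j = P := by
  funext k
  rcases eq_or_ne k i with rfl | hki
  · rw [swapTails_apply_left hij, swapTails_apply_left hij, swapTails_apply_right,
      prefixBefore_prefixBefore_append_suffixFrom _ hvj,
      suffixFrom_prefixBefore_append_suffixFrom _ hvi, prefixBefore_append_suffixFrom]
  rcases eq_or_ne k j with rfl | hkj
  · rw [swapTails_apply_right, swapTails_apply_left hij, swapTails_apply_right,
      prefixBefore_prefixBefore_append_suffixFrom _ hvi,
      suffixFrom_prefixBefore_append_suffixFrom _ hvj, prefixBefore_append_suffixFrom]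
  · rw [swapTails_apply_of_ne hki hkj, swapTails_apply_of_ne hki hkj]

lemma IsFirstCrossing.swapTails (h : IsFirstCrossing P i v j) (hnd : (P i).Nodup) :
    IsFirstCrossing (swapTails P i v j) i v j := by
  have hij : i ≠ j := h.ne.symm
  refine ⟨h.ne, ?_, ?_, ?_, ?_, ?_⟩
  · rw [swapTails_apply_left hij]
    exact List.mem_append_right _ (mem_suffixFrom h.mem_right)
  · rw [swapTails_apply_right]
    exact List.mem_append_right _ (mem_suffixFrom h.mem_left)
  · intro k hk k' hk' w hwk hwk'
    rw [swapTails_apply_of_ne hk.ne (hk.trans h.lt).ne] at hwk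
    rcases mem_swapTails hij hwk' with hw | hw | hw
    · exact h.disjoint_of_lt k hk k' hk' w hwk hw
    · exact h.disjoint_of_lt k hk i hk.ne' w hwk hw
    · exact h.disjoint_of_lt k hk j (hk.trans h.lt).ne' w hwk hw
  · intro w hw k hki hwk
    rw [swapTails_apply_left hij, prefixBefore_prefixBefore_append_suffixFrom _ h.mem_right] at hw
    rcases eq_or_ne k j with rfl | hkj
    · rw [swapTails_apply_right, List.mem_append] at hwk
      rcases hwk with hwk | hwk
      · exact h.notMem_of_mem_prefixBefore w hw k hki (prefixBefore_subset v _ hwk)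
      · rw [← prefixBefore_append_suffixFrom v (P i), List.nodup_append] at hnd
        exact hnd.2.2 w hw w hwk rfl
    · rw [swapTails_apply_of_ne hki hkj] at hwk
      exact h.notMem_of_mem_prefixBefore w hw k hki hwk
  · intro k hk hki hvk
    rw [swapTails_apply_of_ne hki hk.ne] at hvk
    exact h.notMem_of_lt k hk hki hvk

lemma isPath_swapTails {E : V → V → Prop} (hacyc : ¬ ∃ v : V, Relation.TransGen E v v)
    {b c : Fin n → V} {σ : Equiv.Perm (Fin n)} (hP : ∀ k, IsPath E (b k) (c (σ k)) (P k))
    (hij : i ≠ j) (hvi : v ∈ P i) (hvj : v ∈ P j) (k : Fin n) :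
    IsPath E (b k) (c ((σ * Equiv.swap i j) k)) (swapTails P i v j k) := by
  obtain ⟨ri, hPi, hsi⟩ := exists_eq_prefixBefore_append_cons hvi
  obtain ⟨rj, hPj, hsj⟩ := exists_eq_prefixBefore_append_cons hvj
  have hi := hP i
  have hj := hP j
  rw [hPi] at hi
  rw [hPj] at hj
  rcases eq_or_ne k i with rfl | hki
  · rw [swapTails_apply_left hij, hsj, Equiv.Perm.mul_apply, Equiv.swap_apply_left]
    exact IsPath.splice hacyc hi hj
  rcases eq_or_ne k j with rfl | hkj
  · rw [swapTails_apply_right, hsi, Equiv.Perm.mul_apply, Equiv.swap_apply_right]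
    exact IsPath.splice hacyc hj hi
  · rw [swapTails_apply_of_ne hki hkj, Equiv.Perm.mul_apply, Equiv.swap_apply_of_ne_of_ne hki hkj]
    exact hP k

lemma prod_pathWeight_swapTails {R : Type*} [CommRing R] (wt : V → V → R) (hij : i ≠ j)
    (hvi : v ∈ P i) (hvj : v ∈ P j) :
    ∏ k, pathWeight wt (swapTails P i v j k) = ∏ k, pathWeight wt (P k) := by
  obtain ⟨ri, hPi, hsi⟩ := exists_eq_prefixBefore_append_cons hvi
  obtain ⟨rj, hPj, hsj⟩ := exists_eq_prefixBefore_append_cons hvj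
  have hj : j ∈ Finset.univ.erase i := Finset.mem_erase.mpr ⟨hij.symm, Finset.mem_univ j⟩
  rw [← Finset.mul_prod_erase _ _ (Finset.mem_univ i), ← Finset.mul_prod_erase _ _ hj,
    ← Finset.mul_prod_erase _ (fun k => pathWeight wt (P k)) (Finset.mem_univ i),
    ← Finset.mul_prod_erase _ (fun k => pathWeight wt (P k)) hj, ← mul_assoc, ← mul_assoc,
    swapTails_apply_left hij, swapTails_apply_right, hsi, hsj, pathWeight_splice_mul, ← hPi, ← hPj]
  congr 1
  refine Finset.prod_congr rfl fun k hk => ?_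
  rw [Finset.mem_erase, Finset.mem_erase] at hk
  rw [swapTails_apply_of_ne hk.2.1 hk.1]

end Crossing

section Switch

variable [DecidableEq V] {n : ℕ}

open Classical in
noncomputable def switch (x : Equiv.Perm (Fin n) × (Fin n → List V)) :
    Equiv.Perm (Fin n) × (Fin n → List V) :=
  if h : ∃ t : Fin n × V × Fin n, IsFirstCrossing x.2 t.1 t.2.1 t.2.2 then
    (x.1 * Equiv.swap h.choose.1 h.choose.2.2, swapTails x.2 h.choose.1 h.choose.2.1 h.choose.2.2)
  else x

lemma switch_eq {σ : Equiv.Perm (Fin n)} {P : Fin n → List V} {i j : Fin n} {v : V}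
    (h : IsFirstCrossing P i v j) : switch (σ, P) = (σ * Equiv.swap i j, swapTails P i v j) := by
  have hex : ∃ t : Fin n × V × Fin n, IsFirstCrossing P t.1 t.2.1 t.2.2 := ⟨(i, v, j), h⟩
  obtain ⟨hi, hv, hj⟩ := hex.choose_spec.unique h
  rw [switch, dif_pos hex, hi, hv, hj]

end Switch

section Families

variable [Fintype V] {n : ℕ} (E : V → V → Prop) (b c : Fin n → V)

lemma setOf_pathFamily_finite :
    {x : Equiv.Perm (Fin n) × (Fin n → List V) | ∀ k, IsPath E (b k) (c (x.1 k)) (x.2 k)}.Finite :=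
  (Set.finite_univ.prod (Set.Finite.pi fun _ => List.finite_length_le V (Fintype.card V))).subset
    fun _ hx => ⟨Set.mem_univ _, fun k _ => (IsPath.nodup (hx k)).length_le_card⟩

noncomputable def pathFamilies : Finset (Equiv.Perm (Fin n) × (Fin n → List V)) :=
  (setOf_pathFamily_finite E b c).toFinset

variable {E b c}

lemma mem_pathFamilies {x : Equiv.Perm (Fin n) × (Fin n → List V)} :
    x ∈ pathFamilies E b c ↔ ∀ k, IsPath E (b k) (c (x.1 k)) (x.2 k) :=
  Set.Finite.mem_toFinset _

variable {R : Type*} [CommRing R] (wt : V → V → R)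

lemma det_eq_sum_pathFamilies (X : Matrix (Fin n) (Fin n) R)
    (hX : ∀ i j, X i j = ∑ᶠ l ∈ {l : List V | IsPath E (b i) (c j) l}, pathWeight wt l) :
    X.det = ∑ x ∈ pathFamilies E b c, Equiv.Perm.sign x.1 • ∏ k, pathWeight wt (x.2 k) := by
  rw [← Matrix.det_transpose, Matrix.det_apply, Finset.sum_finset_product _ Finset.univ
    (fun σ => Fintype.piFinset fun k => (setOf_isPath_finite E (b k) (c (σ k))).toFinset)
    (by simp [mem_pathFamilies])]
  refine Finset.sum_congr rfl fun σ _ => ?_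
  dsimp only
  rw [← Finset.smul_sum, ← Finset.prod_univ_sum]
  congr 1
  refine Finset.prod_congr rfl fun k _ => ?_
  rw [Matrix.transpose_apply, hX, finsum_mem_eq_finite_toFinset_sum]

open Classical in
lemma sum_pathFamilies_not_disjoint_eq_zero (hacyc : ¬ ∃ v : V, Relation.TransGen E v v) :
    ∑ x ∈ (pathFamilies E b c).filter (fun x => ¬ PairwiseDisjointPaths x.2),
      Equiv.Perm.sign x.1 • ∏ k, pathWeight wt (x.2 k) = 0 := by
  classical
  refine Finset.sum_involution (fun x _ => switch x) ?_ ?_ ?_ ?_ <;>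
    rintro ⟨σ, P⟩ hx <;>
    rw [Finset.mem_filter, mem_pathFamilies] at hx <;>
    obtain ⟨i, v, j, h⟩ := exists_isFirstCrossing hx.2
  · rw [switch_eq h, prod_pathWeight_swapTails wt h.ne.symm h.mem_left h.mem_right, map_mul,
      Equiv.Perm.sign_swap h.ne.symm, mul_neg_one, Units.neg_smul, add_neg_cancel]
  · intro _
    rw [switch_eq h, Ne, Prod.mk.injEq, mul_eq_left, Equiv.swap_eq_one_iff]
    exact fun hij => h.ne hij.1.symm
  · rw [switch_eq h, Finset.mem_filter, mem_pathFamilies]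
    exact ⟨isPath_swapTails hacyc hx.1 h.ne.symm h.mem_left h.mem_right,
      (h.swapTails (IsPath.nodup (hx.1 i))).not_pairwiseDisjointPaths⟩
  · rw [switch_eq h, switch_eq (h.swapTails (IsPath.nodup (hx.1 i))), Equiv.mul_swap_mul_self,
      swapTails_swapTails h.ne.symm h.mem_left h.mem_right]

open Classical in
lemma sum_pathFamilies_disjoint_eq_finsum
    (hplanar : ∀ (σ : Equiv.Perm (Fin n)) (P : Fin n → List V),
      (∀ i, IsPath E (b i) (c (σ i)) (P i)) → PairwiseDisjointPaths P → σ = 1) :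
    ∑ x ∈ (pathFamilies E b c).filter (fun x => PairwiseDisjointPaths x.2),
      Equiv.Perm.sign x.1 • ∏ k, pathWeight wt (x.2 k) =
    ∑ᶠ P ∈ {P : Fin n → List V | (∀ i, IsPath E (b i) (c i) (P i)) ∧ PairwiseDisjointPaths P},
      ∏ i, pathWeight wt (P i) := by
  have hfin : {P : Fin n → List V |
      (∀ i, IsPath E (b i) (c i) (P i)) ∧ PairwiseDisjointPaths P}.Finite :=
    ((setOf_pathFamily_finite E b c).image Prod.snd).subset fun P hP => ⟨(1, P), hP.1, rfl⟩
  rw [finsum_mem_eq_finite_toFinset_sum _ hfin]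
  have hmem : ∀ x : Equiv.Perm (Fin n) × (Fin n → List V),
      x ∈ (pathFamilies E b c).filter (fun x => PairwiseDisjointPaths x.2) ↔
        x.1 = 1 ∧ x.2 ∈ hfin.toFinset := by
    rintro ⟨σ, P⟩
    rw [Finset.mem_filter, mem_pathFamilies, Set.Finite.mem_toFinset]
    constructor
    · rintro ⟨hP, hD⟩
      obtain rfl := hplanar σ P hP hD
      exact ⟨rfl, hP, hD⟩
    · rintro ⟨rfl, hP, hD⟩
      exact ⟨hP, hD⟩
  refine Finset.sum_nbij' Prod.snd (fun P => (1, P)) (fun x hx => ((hmem x).1 hx).2)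
    (fun P hP => (hmem (1, P)).2 ⟨rfl, hP⟩) (fun x hx => Prod.ext ((hmem x).1 hx).1.symm rfl)
    (fun _ _ => rfl) fun x hx => ?_
  rw [((hmem x).1 hx).1, map_one, one_smul]

end Families

end LGV

open scoped BigOperators

theorem stmt_9_general {V : Type*} [Fintype V] {R : Type*} [CommRing R]
    (E : V → V → Prop) (wt : V → V → R) (n : ℕ) (b c : Fin n → V)
    (hacyc : ¬ ∃ v : V, Relation.TransGen E v v)
    (hplanar : ∀ (σ : Equiv.Perm (Fin n)) (P : Fin n → List V),
      (∀ i, IsPath E (b i) (c (σ i)) (P i)) → PairwiseDisjointPaths P → σ = 1)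
    (X : Matrix (Fin n) (Fin n) R)
    (hX : ∀ i j, X i j = ∑ᶠ l ∈ {l : List V | IsPath E (b i) (c j) l}, pathWeight wt l) :
    X.det = ∑ᶠ P ∈ {P : Fin n → List V |
        (∀ i, IsPath E (b i) (c i) (P i)) ∧ PairwiseDisjointPaths P},
      ∏ i : Fin n, pathWeight wt (P i) := by
  classical
  rw [LGV.det_eq_sum_pathFamilies wt X hX,
    ← Finset.sum_filter_add_sum_filter_not _ (fun x => PairwiseDisjointPaths x.2),
    LGV.sum_pathFamilies_not_disjoint_eq_zero wt hacyc, add_zero,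
    LGV.sum_pathFamilies_disjoint_eq_finsum wt hplanar]

/-- Lindström–Gessel–Viennot lemma for a planar acyclic weighted network: if `X` is the
path matrix from sources `b` to sinks `c`, and (as planarity forces) every
vertex-disjoint path family joins `b i` to `c i`, then `det X` is the sum over all
vertex-disjoint path families `(p_1, …, p_n)`, `p_i : b i → c i`, of the products of
the path weights. -/
theorem stmt_9 {V : Type*} [Fintype V] [DecidableEq V] {R : Type*} [CommRing R]
    (E : V → V → Prop) (wt : V → V → R) (n : ℕ) (b c : Fin n → V)
    (hacyc : ¬ ∃ v : V, Relation.TransGen E v v)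
    (hb : Function.Injective b) (hc : Function.Injective c)
    (hplanar : ∀ (σ : Equiv.Perm (Fin n)) (P : Fin n → List V),
      (∀ i, IsPath E (b i) (c (σ i)) (P i)) → PairwiseDisjointPaths P → σ = 1)
    (X : Matrix (Fin n) (Fin n) R)
    (hX : ∀ i j, X i j = ∑ᶠ l ∈ {l : List V | IsPath E (b i) (c j) l}, pathWeight wt l) :
    X.det = ∑ᶠ P ∈ {P : Fin n → List V |
        (∀ i, IsPath E (b i) (c i) (P i)) ∧ PairwiseDisjointPaths P},
      ∏ i : Fin n, pathWeight wt (P i) :=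
  stmt_9_general E wt n b c hacyc hplanar X hX
end

section
/- For the symmetric group S_n, the linear span (inside the space of functions on matrix entries, i.e., the span of monomials x_{1,w(1)}⋯x_{n,w(n)} for w ∈ S_n) of all products Δ_{I_1,J_1}·Δ_{I_2,J_2}·Δ_{I_3,J_3} of triples of complementary minors has dimension equal to the number of 4321-avoiding permutations in S_n. -/
open MvPolynomial

/-- The generic `n × n` matrix with entries the variables `x_{i,j}`. -/
noncomputable def genMatrix (n : ℕ) : Matrix (Fin n) (Fin n) (MvPolynomial (Fin n × Fin n) ℚ) :=
  fun i j => MvPolynomial.X (i, j)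

/-- The minor `Δ_{I,J}` of the generic matrix, rows `I` and columns `J` in increasing
order. -/
noncomputable def genMinor {n k : ℕ} (I J : Finset (Fin n)) (hI : I.card = k)
    (hJ : J.card = k) : MvPolynomial (Fin n × Fin n) ℚ :=
  ((genMatrix n).submatrix (I.orderEmbOfFin hI) (J.orderEmbOfFin hJ)).det

/-- The set of all products of triples of complementary minors of the generic matrix. -/
def TripleMinorProducts (n : ℕ) : Set (MvPolynomial (Fin n × Fin n) ℚ) :=
  {p | ∃ (k1 k2 k3 : ℕ) (I1 I2 I3 J1 J2 J3 : Finset (Fin n))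
      (hI1 : I1.card = k1) (hJ1 : J1.card = k1) (hI2 : I2.card = k2) (hJ2 : J2.card = k2)
      (hI3 : I3.card = k3) (hJ3 : J3.card = k3),
    I1 ∪ I2 ∪ I3 = Finset.univ ∧ Disjoint I1 I2 ∧ Disjoint I1 I3 ∧ Disjoint I2 I3 ∧
    J1 ∪ J2 ∪ J3 = Finset.univ ∧ Disjoint J1 J2 ∧ Disjoint J1 J3 ∧ Disjoint J2 J3 ∧
    p = genMinor I1 J1 hI1 hJ1 * genMinor I2 J2 hI2 hJ2 * genMinor I3 J3 hI3 hJ3}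

/-- `w` avoids the pattern `4321`. -/
def Avoids4321 {n : ℕ} (w : Equiv.Perm (Fin n)) : Prop :=
  ¬ ∃ i1 i2 i3 i4 : Fin n, i1 < i2 ∧ i2 < i3 ∧ i3 < i4 ∧
    w i2 < w i1 ∧ w i3 < w i2 ∧ w i4 < w i3

open Equiv Finset Module

/-!
Record a polynomial by its coefficients at the permutation monomials `∏ i, x_{i, w i}`. Every
product of complementary minors lies in the span of these monomials, so this is injective on the
span of the triple products. Up to sign, the product of the minors with row blocks `f⁻¹ m` and
column blocks `g⁻¹ m` is the determinant of the generic matrix with the entries outside the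
blocks erased; its coefficient at `v` is therefore `sign v` if `v` carries every row block onto
the matching column block, and `0` otherwise.

A `4321`-avoiding `w` is a union of three increasing subsequences: colour each position by the
length of the longest decreasing subsequence of `w` ending there. With these as row blocks and
their images under `w` as column blocks, the coefficient vector is supported on permutations
lexicographically at least `w` and does not vanish at `w`: a triangular, hence independent,
family in the span. Conversely, if `w` increases on a `4`-set `P`, the indicator of the coset
`{v | v = w off P}` annihilates every triple product, because two points of `P` share a row block
and swapping them reverses signs; these indicators are triangular as well. Finally `w ↦ w ∘ rev`
matches the `4321`-avoiding permutations with those having no increasing subsequence of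
length `4`.
-/

section Fibers

variable {α ι : Type*} [Fintype α] [DecidableEq ι]

def fiberFinset (f : α → ι) (m : ι) : Finset α := {a | f a = m}

lemma mem_fiberFinset {f : α → ι} {m : ι} {a : α} : a ∈ fiberFinset f m ↔ f a = m := by
  simp [fiberFinset]

lemma disjoint_fiberFinset (f : α → ι) {m m' : ι} (h : m ≠ m') :
    Disjoint (fiberFinset f m) (fiberFinset f m') :=
  disjoint_filter.2 fun _ _ h₁ h₂ => h (h₁ ▸ h₂)

lemma card_fiberFinset_comp_perm (f : α → ι) (σ : Perm α) (m : ι) :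
    (fiberFinset (f ∘ σ) m).card = (fiberFinset f m).card := by
  refine card_nbij' σ σ.symm (fun a ha => ?_) (fun a ha => ?_) (fun a _ => ?_) (fun a _ => ?_) <;>
    simp_all [mem_fiberFinset]

lemma fiberFinset_union_fin_three [DecidableEq α] (f : α → Fin 3) :
    fiberFinset f 0 ∪ fiberFinset f 1 ∪ fiberFinset f 2 = univ := by
  ext a
  simp only [mem_union, mem_fiberFinset, mem_univ, iff_true]
  generalize f a = m
  fin_cases m <;> simp

lemma exists_fiberFinset_eq_of_partition [DecidableEq α] {I₀ I₁ I₂ : Finset α}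
    (hu : I₀ ∪ I₁ ∪ I₂ = univ) (h₀₁ : Disjoint I₀ I₁) (h₀₂ : Disjoint I₀ I₂)
    (h₁₂ : Disjoint I₁ I₂) :
    ∃ f : α → Fin 3, fiberFinset f 0 = I₀ ∧ fiberFinset f 1 = I₁ ∧ fiberFinset f 2 = I₂ := by
  refine ⟨fun a => if a ∈ I₀ then 0 else if a ∈ I₁ then 1 else 2, ?_, ?_, ?_⟩ <;> ext a <;>
    have ha : a ∈ I₀ ∪ I₁ ∪ I₂ := hu ▸ mem_univ a <;>
    simp only [mem_fiberFinset, mem_union] at ha ⊢ <;> split_ifs with h₀ h₁ <;>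
    simp_all [disjoint_left]

end Fibers

section BlockMinors

variable {α ι : Type*} [DecidableEq ι]

def Matrix.blockMask {R : Type*} [Zero R] (f g : α → ι) (A : Matrix α α R) : Matrix α α R :=
  Matrix.of fun i j => if f i = g j then A i j else 0

variable [Fintype α] [LinearOrder α]

lemma apply_orderEmbOfFin_fiberFinset {f : α → ι} {m : ι} {k : ℕ}
    (h : (fiberFinset f m).card = k) (i : Fin k) : f ((fiberFinset f m).orderEmbOfFin h i) = m :=
  mem_fiberFinset.1 (Finset.orderEmbOfFin_mem _ h i)

noncomputable def fiberEquiv (f : α → ι) (k : ι → ℕ) (hk : ∀ m, (fiberFinset f m).card = k m)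
    (m : ι) : Fin (k m) ≃ {a // f a = m} :=
  ((fiberFinset f m).orderIsoOfFin (hk m)).toEquiv.trans
    (Equiv.subtypeEquivRight fun _ => mem_fiberFinset)

noncomputable def blockEquiv (f : α → ι) (k : ι → ℕ) (hk : ∀ m, (fiberFinset f m).card = k m) :
    (Σ m, Fin (k m)) ≃ α :=
  (Equiv.sigmaCongrRight (fiberEquiv f k hk)).trans (Equiv.sigmaFiberEquiv f)

lemma blockEquiv_mk (f : α → ι) (k : ι → ℕ) (hk : ∀ m, (fiberFinset f m).card = k m) (m : ι)
    (i : Fin (k m)) : blockEquiv f k hk ⟨m, i⟩ = (fiberFinset f m).orderEmbOfFin (hk m) i :=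
  rfl

lemma apply_blockEquiv (f : α → ι) (k : ι → ℕ) (hk : ∀ m, (fiberFinset f m).card = k m)
    (x : Σ m, Fin (k m)) : f (blockEquiv f k hk x) = x.1 :=
  (fiberEquiv f k hk x.1 x.2).2

/-- Permuting the columns of the masked matrix by `(blockEquiv f).symm.trans (blockEquiv g)`,
which carries each row block order-preservingly onto the matching column block, makes it block
diagonal with these minors as its blocks. -/
theorem prod_det_submatrix_fiberFinset [Fintype ι] {R : Type*} [CommRing R] (A : Matrix α α R)
    (f g : α → ι) (hg : ∀ m, (fiberFinset g m).card = (fiberFinset f m).card) :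
    ∏ m, (A.submatrix ((fiberFinset f m).orderEmbOfFin rfl)
        ((fiberFinset g m).orderEmbOfFin (hg m))).det =
      Perm.sign ((blockEquiv f _ fun _ => rfl).symm.trans (blockEquiv g _ hg)) •
        (A.blockMask f g).det := by
  -- `BlockTriangular.det_fintype` needs an order on the blocks; any one will do.
  let : LinearOrder ι := LinearOrder.lift' _ (Fintype.equivFin ι).injective
  set σ := (blockEquiv f _ fun _ => rfl).symm.trans (blockEquiv g _ hg)
  have hσ : ∀ x, σ (blockEquiv f _ (fun _ => rfl) x) = blockEquiv g _ hg x := fun x => by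
    simp [σ]
  have hgσ : ∀ a, g (σ a) = f a := by
    intro a
    obtain ⟨x, rfl⟩ := (blockEquiv f _ fun _ => rfl).surjective a
    rw [hσ, apply_blockEquiv g, apply_blockEquiv f]
  have hM : ((A.blockMask f g).submatrix id σ).BlockTriangular f := by
    intro i j hij
    simp [Matrix.blockMask, hgσ, hij.ne']
  rw [Units.smul_def, zsmul_eq_mul, ← Matrix.det_permute', hM.det_fintype]
  refine Finset.prod_congr rfl fun m _ => ?_
  rw [← Matrix.det_submatrix_equiv_self (fiberEquiv f _ (fun _ => rfl) m)]
  congr 1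
  ext i j
  have hσj := hσ ⟨m, j⟩
  simp only [blockEquiv_mk] at hσj
  simp [Matrix.toSquareBlock_def, Matrix.blockMask, fiberEquiv, hgσ, hσj,
    apply_orderEmbOfFin_fiberFinset]

end BlockMinors

section PermMonomials

variable {α R : Type*} [Fintype α] [CommSemiring R]

noncomputable def permExponent (w : Perm α) : α × α →₀ ℕ :=
  ∑ i, Finsupp.single (i, w i) 1

variable (R) in
noncomputable def permMonomial (w : Perm α) : MvPolynomial (α × α) R :=
  monomial (permExponent w) 1

variable (α R) in
noncomputable def permCoeff : MvPolynomial (α × α) R →ₗ[R] Perm α → R :=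
  LinearMap.pi fun w => lcoeff R (permExponent w)

lemma permCoeff_apply (p : MvPolynomial (α × α) R) (w : Perm α) :
    permCoeff α R p w = coeff (permExponent w) p :=
  rfl

lemma prod_X_eq_permMonomial (w : Perm α) :
    ∏ i, (X (i, w i) : MvPolynomial (α × α) R) = permMonomial R w := by
  rw [permMonomial, permExponent, monomial_sum_one]
  rfl

variable [DecidableEq α]

lemma permExponent_apply (w : Perm α) (i j : α) :
    permExponent w (i, j) = if w i = j then 1 else 0 := by
  rw [permExponent, Finsupp.finsetSum_apply, Finset.sum_eq_single i]
  · simp [Finsupp.single_apply]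
  · intro k _ hki
    simp [hki]
  · simp

lemma permExponent_injective : Function.Injective (permExponent (α := α)) := by
  intro v w h
  ext i
  simpa [permExponent_apply, eq_comm] using DFunLike.congr_fun h (i, v i)

lemma permCoeff_permMonomial (v : Perm α) : permCoeff α R (permMonomial R v) = Pi.single v 1 := by
  ext w
  simp [permCoeff_apply, permMonomial, coeff_monomial, permExponent_injective.eq_iff,
    Pi.single_apply, eq_comm]

lemma finrank_map_permCoeff {K : Type*} [Field K] {V : Submodule K (MvPolynomial (α × α) K)}
    (hV : V ≤ Submodule.span K (Set.range (permMonomial K))) :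
    finrank K (V.map (permCoeff α K)) = finrank K V := by
  set G := Fintype.linearCombination K (permMonomial (α := α) K)
  have hG : ∀ x ∈ V, G (permCoeff α K x) = x := by
    intro x hx
    obtain ⟨c, rfl⟩ : x ∈ LinearMap.range G := by
      rw [Fintype.range_linearCombination]; exact hV hx
    congr 1
    ext w
    simp [G, Fintype.linearCombination_apply, permCoeff_permMonomial, Pi.single_apply]
  have hinj : Function.Injective ((permCoeff α K).domRestrict V) := fun x y hxy =>
    Subtype.ext (by rw [← hG x x.2, ← hG y y.2]; exact congrArg G hxy)
  rw [← LinearMap.range_domRestrict]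
  exact (LinearEquiv.ofInjective _ hinj).finrank_eq.symm

end PermMonomials

section MaskedDeterminant

variable {α ι R : Type*} [Fintype α] [DecidableEq α] [DecidableEq ι] [CommRing R]

theorem det_blockMask_mvPolynomialX (f g : α → ι) :
    ((Matrix.mvPolynomialX α α R).blockMask f g).det =
      ∑ w : Perm α, if g ∘ ⇑w = f then Perm.sign w • permMonomial R w else 0 := by
  rw [← Matrix.det_transpose, Matrix.det_apply]
  refine Finset.sum_congr rfl fun w _ => ?_
  simp only [Matrix.transpose_apply, Matrix.blockMask, Matrix.of_apply,
    Matrix.mvPolynomialX_apply, Finset.prod_ite_zero, prod_X_eq_permMonomial]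
  simp [funext_iff, eq_comm]

theorem permCoeff_det_blockMask (f g : α → ι) (v : Perm α) :
    permCoeff α R ((Matrix.mvPolynomialX α α R).blockMask f g).det v =
      if g ∘ ⇑v = f then (Perm.sign v : R) else 0 := by
  rw [det_blockMask_mvPolynomialX, map_sum, Finset.sum_apply, Finset.sum_eq_single v]
  · split_ifs
    · rw [Units.smul_def, map_zsmul, Pi.smul_apply, permCoeff_permMonomial, Pi.single_eq_same,
        zsmul_one]
    · simp
  · intro w _ hwv
    split_ifs
    · rw [Units.smul_def, map_zsmul, Pi.smul_apply, permCoeff_permMonomial,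
        Pi.single_eq_of_ne hwv.symm, smul_zero]
    · simp
  · simp

end MaskedDeterminant

section Cosets

variable {α : Type*} [DecidableEq α]

lemma comp_swap_eq_iff {β : Type*} {f h : α → β} {p q : α} (hf : f p = f q) :
    h ∘ swap p q = f ↔ h = f := by
  have hfs : f ∘ swap p q = f := by
    ext x
    rcases eq_or_ne x p with rfl | hxp
    · simp [hf]
    rcases eq_or_ne x q with rfl | hxq
    · simp [hf]
    · simp [swap_apply_of_ne_of_ne hxp hxq]
  refine ⟨fun h' => ?_, fun h' => h' ▸ hfs⟩
  rw [← hfs]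
  ext x
  simpa using congr_fun h' (swap p q x)

variable [Fintype α]

def permsAgreeingOff (w : Perm α) (P : Finset α) : Finset (Perm α) :=
  {v | ∀ i ∉ P, v i = w i}

/-- By pigeonhole two points of `P` share a row block; swapping them is a sign-reversing
involution of the summation range. -/
theorem sum_permsAgreeingOff_sign_eq_zero {ι R : Type*} [Fintype ι] [DecidableEq ι] [Ring R]
    (f g : α → ι) (w : Perm α) {P : Finset α} (hP : Fintype.card ι < P.card) :
    ∑ v ∈ permsAgreeingOff w P, (if g ∘ ⇑v = f then (Perm.sign v : R) else 0) = 0 := by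
  obtain ⟨p, hp, q, hq, hpq, hf⟩ :=
    exists_ne_map_eq_of_card_lt_of_maps_to (t := univ) (by simpa using hP) (f := f)
      fun _ _ => mem_coe.2 (mem_univ _)
  have hcomp : ∀ v : Perm α, g ∘ ⇑(v * swap p q) = f ↔ g ∘ ⇑v = f := fun v => by
    rw [Perm.coe_mul, ← Function.comp_assoc]
    exact comp_swap_eq_iff hf
  refine sum_involution (fun v _ => v * swap p q) (fun v _ => ?_) (fun v _ _ => ?_)
    (fun v hv => ?_) (fun v _ => ?_)
  · simp only [hcomp, Perm.sign_mul, Perm.sign_swap hpq]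
    split_ifs <;> simp
  · simpa [swap_eq_one_iff] using hpq
  · simp only [permsAgreeingOff, mem_filter, mem_univ, true_and] at hv ⊢
    intro i hi
    rw [Perm.mul_apply, swap_apply_of_ne_of_ne (ne_of_mem_of_not_mem hp hi).symm
      (ne_of_mem_of_not_mem hq hi).symm, hv i hi]
  · simp [mul_assoc]

end Cosets

section LinearAlgebra

theorem linearIndependent_of_apply_ne_zero_of_le {R X κ L : Type*} [Ring R] [NoZeroDivisors R]
    [LinearOrder L] {v : κ → X → R} {ℓ : κ → X} {o : X → L} (hℓ : Function.Injective ℓ)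
    (ho : Function.Injective o) (hdiag : ∀ a, v a (ℓ a) ≠ 0)
    (hsupp : ∀ a x, v a x ≠ 0 → o (ℓ a) ≤ o x) :
    LinearIndependent R v := by
  rw [linearIndependent_iff]
  intro l hl
  by_contra hne
  obtain ⟨a, ha, hmin⟩ :=
    l.support.exists_min_image (o ∘ ℓ) (Finsupp.support_nonempty_iff.2 hne)
  have hvanish : ∀ b ∈ l.support, b ≠ a → l b • v b (ℓ a) = 0 := by
    intro b hb hba
    by_contra h
    have hle := hsupp b (ℓ a) (right_ne_zero_of_mul h)
    exact hba (hℓ (ho (le_antisymm hle (hmin b hb))))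
  have hev := congr_fun hl (ℓ a)
  simp only [Finsupp.linearCombination_apply, Finsupp.sum, Finset.sum_apply, Pi.smul_apply,
    Pi.zero_apply] at hev
  rw [Finset.sum_eq_single a hvanish (fun h => absurd ha h)] at hev
  exact mul_ne_zero (Finsupp.mem_support_iff.1 ha) (hdiag a) hev

theorem finrank_add_card_le_of_le_ker {K X ι : Type*} [Field K] [Fintype X] [Fintype ι]
    {A : Matrix ι X K} (hA : LinearIndependent K A.row) {U : Submodule K (X → K)}
    (hU : U ≤ LinearMap.ker A.mulVecLin) :
    finrank K U + Fintype.card ι ≤ Fintype.card X := by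
  have hrank := LinearMap.finrank_range_add_finrank_ker A.mulVecLin
  rw [← Matrix.rank, hA.rank_matrix, Module.finrank_fintype_fun_eq_card] at hrank
  have := Submodule.finrank_mono hU
  omega

end LinearAlgebra

section Patterns

variable {n : ℕ}

lemma toLex_coe_injective : Function.Injective fun v : Perm (Fin n) => toLex ⇑v :=
  fun _ _ h => DFunLike.coe_injective (toLex.injective h)

theorem toLex_le_of_strictMonoOn_fibers {κ : Type*} (β : Fin n → κ) {v w : Perm (Fin n)}
    (hw : ∀ c, StrictMonoOn w (β ⁻¹' {c})) (hv : ∀ i, ∃ j, β j = β i ∧ v i = w j) :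
    toLex ⇑w ≤ toLex ⇑v := by
  refine not_lt.1 fun ⟨i, hlt, hi⟩ => ?_
  obtain ⟨j, hβ, hvj⟩ := hv i
  rcases lt_trichotomy j i with hji | rfl | hij
  · exact hji.ne (v.injective ((hlt j hji).trans hvj.symm))
  · exact hi.ne hvj
  · exact (hw (β i) rfl hβ hij).not_gt (hvj ▸ hi)

lemma toLex_le_of_mem_permsAgreeingOff {v w : Perm (Fin n)} {P : Finset (Fin n)}
    (hw : StrictMonoOn w P) (hv : v ∈ permsAgreeingOff w P) : toLex ⇑w ≤ toLex ⇑v := by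
  classical
  simp only [permsAgreeingOff, mem_filter, mem_univ, true_and] at hv
  refine toLex_le_of_strictMonoOn_fibers (fun i => if i ∈ P then none else some i)
    (fun c i hi j hj hij => ?_) (fun i => ?_)
  · simp only [Set.mem_preimage, Set.mem_singleton_iff] at hi hj
    subst hi
    split_ifs at hj with hjP hiP hiP
    · exact hw hiP hjP hij
    · exact absurd (Option.some.inj hj) hij.ne'
  · by_cases hi : i ∈ P
    · have hmem : w.symm (v i) ∈ P := by
        by_contra h
        have hfix := hv _ h
        rw [w.apply_symm_apply] at hfix
        rw [v.injective hfix] at h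
        exact h hi
      exact ⟨w.symm (v i), by simp [hi, hmem], (w.apply_symm_apply _).symm⟩
    · exact ⟨i, rfl, hv i hi⟩

def decreasingDepth (w : Perm (Fin n)) (i : Fin n) : ℕ :=
  (univ.filter fun j => j < i ∧ w i < w j).attach.sup fun j => decreasingDepth w j.1 + 1
termination_by i
decreasing_by exact (mem_filter.1 j.2).2.1

lemma decreasingDepth_lt {w : Perm (Fin n)} {i j : Fin n} (hij : i < j) (hw : w j < w i) :
    decreasingDepth w i < decreasingDepth w j := by
  have : decreasingDepth w i + 1 ≤ decreasingDepth w j := by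
    conv_rhs => rw [decreasingDepth]
    exact le_sup (f := fun k : {k // k ∈ univ.filter fun k => k < j ∧ w j < w k} =>
      decreasingDepth w k.1 + 1) (mem_attach _ ⟨i, by simp [hij, hw]⟩)
  omega

lemma exists_lt_of_lt_decreasingDepth {w : Perm (Fin n)} {i : Fin n} {k : ℕ}
    (h : k < decreasingDepth w i) :
    ∃ j < i, w i < w j ∧ k ≤ decreasingDepth w j := by
  rw [decreasingDepth, Finset.lt_sup_iff] at h
  obtain ⟨⟨j, hj⟩, -, hk⟩ := h
  dsimp only at hk
  rw [mem_filter] at hj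
  exact ⟨j, hj.2.1, hj.2.2, by omega⟩

lemma Avoids4321.decreasingDepth_le_two {w : Perm (Fin n)} (hw : Avoids4321 w) (i : Fin n) :
    decreasingDepth w i ≤ 2 := by
  by_contra! h
  obtain ⟨i₃, h₃, hw₃, hd₃⟩ := exists_lt_of_lt_decreasingDepth h
  obtain ⟨i₂, h₂, hw₂, hd₂⟩ :=
    exists_lt_of_lt_decreasingDepth (show 1 < decreasingDepth w i₃ by omega)
  obtain ⟨i₁, h₁, hw₁, -⟩ :=
    exists_lt_of_lt_decreasingDepth (show 0 < decreasingDepth w i₂ by omega)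
  exact hw ⟨i₁, i₂, i₃, i, h₁, h₂, h₃, hw₁, hw₂, hw₃⟩

theorem Avoids4321.exists_strictMonoOn_fibers {w : Perm (Fin n)} (hw : Avoids4321 w) :
    ∃ f : Fin n → Fin 3, ∀ m, StrictMonoOn w (f ⁻¹' {m}) := by
  refine ⟨fun i => ⟨decreasingDepth w i, by have := hw.decreasingDepth_le_two i; omega⟩,
    fun m i hi j hj hij => ?_⟩
  by_contra! h
  have := decreasingDepth_lt hij (h.lt_of_ne (w.injective.ne hij.ne'))
  simp only [Set.mem_preimage, Set.mem_singleton_iff, Fin.ext_iff] at hi hj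
  omega

def HasIncreasingSubseq (k : ℕ) (w : Perm (Fin n)) : Prop :=
  ∃ e : Fin k → Fin n, StrictMono e ∧ StrictMono (w ∘ e)

lemma not_avoids4321_iff {w : Perm (Fin n)} :
    ¬ Avoids4321 w ↔ ∃ e : Fin 4 → Fin n, StrictMono e ∧ StrictAnti (w ∘ e) := by
  simp only [Avoids4321, not_not, Fin.strictMono_iff_lt_succ, Fin.strictAnti_iff_succ_lt]
  constructor
  · rintro ⟨a, b, c, d, hab, hbc, hcd, h₁, h₂, h₃⟩
    exact ⟨![a, b, c, d], fun i => by fin_cases i <;> assumption,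
      fun i => by fin_cases i <;> assumption⟩
  · rintro ⟨e, he, hwe⟩
    exact ⟨e 0, e 1, e 2, e 3, he 0, he 1, he 2, hwe 0, hwe 1, hwe 2⟩

lemma hasIncreasingSubseq_mul_revPerm_iff {k : ℕ} {w : Perm (Fin n)} :
    HasIncreasingSubseq k (w * Fin.revPerm) ↔
      ∃ e : Fin k → Fin n, StrictMono e ∧ StrictAnti (w ∘ e) := by
  have hrev : ∀ e : Fin k → Fin n, StrictMono e → StrictMono (Fin.rev ∘ e ∘ Fin.rev) :=
    fun e he => Fin.rev_strictAnti.comp (he.comp_strictAnti Fin.rev_strictAnti)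
  constructor
  · rintro ⟨e, he, hwe⟩
    have hcomp :
        ⇑w ∘ (Fin.rev ∘ e ∘ Fin.rev) = (⇑(w * Fin.revPerm : Perm (Fin n)) ∘ e) ∘ Fin.rev :=
      funext fun x => by simp [Fin.revPerm_apply]
    exact ⟨_, hrev e he, by rw [hcomp]; exact StrictMono.comp_strictAnti hwe Fin.rev_strictAnti⟩
  · rintro ⟨e, he, hwe⟩
    have hcomp :
        ⇑(w * Fin.revPerm : Perm (Fin n)) ∘ (Fin.rev ∘ e ∘ Fin.rev) = (⇑w ∘ e) ∘ Fin.rev :=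
      funext fun x => by simp [Fin.revPerm_apply]
    exact ⟨_, hrev e he, by rw [hcomp]; exact StrictAnti.comp hwe Fin.rev_strictAnti⟩

theorem card_avoids4321_add_card_hasIncreasingSubseq :
    Nat.card {w : Perm (Fin n) // Avoids4321 w} +
      Nat.card {w : Perm (Fin n) // HasIncreasingSubseq 4 w} = n.factorial := by
  classical
  have hrev : Nat.card {w : Perm (Fin n) // Avoids4321 w} =
      Nat.card {w : Perm (Fin n) // ¬ HasIncreasingSubseq 4 w} :=
    Nat.card_congr <| (Equiv.mulRight Fin.revPerm).subtypeEquiv fun w => by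
      rw [Equiv.coe_mulRight, hasIncreasingSubseq_mul_revPerm_iff, ← not_avoids4321_iff, not_not]
  simp only [hrev, Nat.card_eq_fintype_card, Fintype.card_subtype_compl, Fintype.card_perm,
    Fintype.card_fin]
  have := Fintype.card_subtype_le (HasIncreasingSubseq 4 (n := n))
  rw [Fintype.card_perm, Fintype.card_fin] at this
  omega

end Patterns

section TripleMinors

variable {n : ℕ}

lemma genMatrix_eq_mvPolynomialX : genMatrix n = Matrix.mvPolynomialX (Fin n) (Fin n) ℚ :=
  rfl

theorem exists_eq_smul_det_blockMask {p : MvPolynomial (Fin n × Fin n) ℚ}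
    (hp : p ∈ TripleMinorProducts n) :
    ∃ (f g : Fin n → Fin 3) (s : ℤˣ), p = s • ((genMatrix n).blockMask f g).det := by
  obtain ⟨k₁, k₂, k₃, I₁, I₂, I₃, J₁, J₂, J₃, hI₁, hJ₁, hI₂, hJ₂, hI₃, hJ₃,
    hIu, hI₁₂, hI₁₃, hI₂₃, hJu, hJ₁₂, hJ₁₃, hJ₂₃, rfl⟩ := hp
  obtain ⟨f, rfl, rfl, rfl⟩ := exists_fiberFinset_eq_of_partition hIu hI₁₂ hI₁₃ hI₂₃
  obtain ⟨g, rfl, rfl, rfl⟩ := exists_fiberFinset_eq_of_partition hJu hJ₁₂ hJ₁₃ hJ₂₃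
  subst hI₁ hI₂ hI₃
  have hg : ∀ m, (fiberFinset g m).card = (fiberFinset f m).card := by
    intro m
    fin_cases m
    exacts [hJ₁, hJ₂, hJ₃]
  have hprod := prod_det_submatrix_fiberFinset (genMatrix n) f g hg
  rw [Fin.prod_univ_three] at hprod
  exact ⟨f, g, _, hprod⟩

theorem det_blockMask_mem_span (f g : Fin n → Fin 3)
    (hg : ∀ m, (fiberFinset g m).card = (fiberFinset f m).card) :
    ((genMatrix n).blockMask f g).det ∈ Submodule.span ℚ (TripleMinorProducts n) := by
  have hmem : ∏ m, genMinor (fiberFinset f m) (fiberFinset g m) rfl (hg m) ∈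
      TripleMinorProducts n :=
    ⟨_, _, _, _, _, _, _, _, _, rfl, hg 0, rfl, hg 1, rfl, hg 2, fiberFinset_union_fin_three f,
      disjoint_fiberFinset f (by decide), disjoint_fiberFinset f (by decide),
      disjoint_fiberFinset f (by decide), fiberFinset_union_fin_three g,
      disjoint_fiberFinset g (by decide), disjoint_fiberFinset g (by decide),
      disjoint_fiberFinset g (by decide), Fin.prod_univ_three _⟩
  have hprod := prod_det_submatrix_fiberFinset (genMatrix n) f g hg
  rw [← inv_smul_eq_iff] at hprod
  rw [← hprod, Units.smul_def]
  exact zsmul_mem (Submodule.subset_span hmem) _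

lemma span_tripleMinorProducts_le :
    Submodule.span ℚ (TripleMinorProducts n) ≤ Submodule.span ℚ (Set.range (permMonomial ℚ)) := by
  rw [Submodule.span_le]
  intro p hp
  obtain ⟨f, g, s, rfl⟩ := exists_eq_smul_det_blockMask hp
  rw [Units.smul_def, genMatrix_eq_mvPolynomialX, det_blockMask_mvPolynomialX]
  refine zsmul_mem (sum_mem fun w _ => ?_) _
  split_ifs
  · rw [Units.smul_def]
    exact zsmul_mem (Submodule.subset_span (Set.mem_range_self w)) _
  · exact zero_mem _

theorem sum_permsAgreeingOff_permCoeff_eq_zero {p : MvPolynomial (Fin n × Fin n) ℚ}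
    (hp : p ∈ TripleMinorProducts n) (w : Perm (Fin n)) {P : Finset (Fin n)} (hP : 3 < P.card) :
    ∑ v ∈ permsAgreeingOff w P, permCoeff (Fin n) ℚ p v = 0 := by
  obtain ⟨f, g, s, rfl⟩ := exists_eq_smul_det_blockMask hp
  simp only [Units.smul_def, map_zsmul, Pi.smul_apply, ← Finset.smul_sum,
    genMatrix_eq_mvPolynomialX, permCoeff_det_blockMask]
  rw [sum_permsAgreeingOff_sign_eq_zero f g w (by simpa using hP), smul_zero]

theorem card_avoids4321_le_finrank :
    Nat.card {w : Perm (Fin n) // Avoids4321 w} ≤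
      finrank ℚ ((Submodule.span ℚ (TripleMinorProducts n)).map (permCoeff (Fin n) ℚ)) := by
  classical
  choose f hf using fun w : {w : Perm (Fin n) // Avoids4321 w} =>
    w.2.exists_strictMonoOn_fibers
  let q (w : {w : Perm (Fin n) // Avoids4321 w}) : Perm (Fin n) → ℚ :=
    permCoeff (Fin n) ℚ ((genMatrix n).blockMask (f w) (f w ∘ w.1.symm)).det
  have hq : LinearIndependent ℚ q := by
    refine linearIndependent_of_apply_ne_zero_of_le Subtype.val_injective toLex_coe_injective
      (fun w => ?_) (fun w v hv => ?_)
    · simp [q, genMatrix_eq_mvPolynomialX, permCoeff_det_blockMask, Function.comp_assoc]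
    · have hc : (f w ∘ w.1.symm) ∘ v = f w := by
        by_contra h
        simp [q, genMatrix_eq_mvPolynomialX, permCoeff_det_blockMask, h] at hv
      exact toLex_le_of_strictMonoOn_fibers (f w) (hf w) fun i =>
        ⟨w.1.symm (v i), congr_fun hc i, (w.1.apply_symm_apply _).symm⟩
  have hmem : ∀ w, q w ∈ (Submodule.span ℚ (TripleMinorProducts n)).map (permCoeff (Fin n) ℚ) :=
    fun w => Submodule.mem_map_of_mem
      (det_blockMask_mem_span _ _ (card_fiberFinset_comp_perm (f w) w.1.symm))
  rw [Nat.card_eq_fintype_card, ← finrank_span_eq_card hq]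
  exact Submodule.finrank_mono (Submodule.span_le.2 (Set.range_subset_iff.2 hmem))

theorem finrank_add_card_hasIncreasingSubseq_le :
    finrank ℚ ((Submodule.span ℚ (TripleMinorProducts n)).map (permCoeff (Fin n) ℚ)) +
      Nat.card {w : Perm (Fin n) // HasIncreasingSubseq 4 w} ≤ n.factorial := by
  classical
  choose e he hwe using fun w : {w : Perm (Fin n) // HasIncreasingSubseq 4 w} => w.2
  let P (w : {w : Perm (Fin n) // HasIncreasingSubseq 4 w}) : Finset (Fin n) := univ.image (e w)
  have hP : ∀ w, 3 < (P w).card := fun w => by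
    simp [P, card_image_of_injective _ (he w).injective]
  have hPw : ∀ w, StrictMonoOn w.1 (P w) := by
    rintro w _ ha _ hb hab
    obtain ⟨x, -, rfl⟩ := mem_image.1 (mem_coe.1 ha)
    obtain ⟨y, -, rfl⟩ := mem_image.1 (mem_coe.1 hb)
    exact hwe w ((he w).lt_iff_lt.1 hab)
  let A : Matrix {w : Perm (Fin n) // HasIncreasingSubseq 4 w} (Perm (Fin n)) ℚ :=
    Matrix.of fun w v => if v ∈ permsAgreeingOff w.1 (P w) then 1 else 0
  have hA : LinearIndependent ℚ A.row := by
    refine linearIndependent_of_apply_ne_zero_of_le Subtype.val_injective toLex_coe_injective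
      (fun w => ?_) (fun w v hv => ?_)
    · simp [A, Matrix.row, permsAgreeingOff]
    · exact toLex_le_of_mem_permsAgreeingOff (hPw w) (by by_contra h; simp [A, Matrix.row, h] at hv)
  have hU : (Submodule.span ℚ (TripleMinorProducts n)).map (permCoeff (Fin n) ℚ) ≤
      LinearMap.ker A.mulVecLin := by
    rw [Submodule.map_le_iff_le_comap, Submodule.span_le]
    intro p hp
    simp only [SetLike.mem_coe, Submodule.mem_comap, LinearMap.mem_ker, Matrix.mulVecLin_apply]
    ext w
    simp only [Matrix.mulVec, dotProduct, A, Matrix.of_apply, ite_mul, one_mul, zero_mul,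
      Finset.sum_ite_mem, univ_inter, Pi.zero_apply]
    exact sum_permsAgreeingOff_permCoeff_eq_zero hp w.1 (hP w)
  have := finrank_add_card_le_of_le_ker hA hU
  rwa [Fintype.card_perm, Fintype.card_fin, ← Nat.card_eq_fintype_card] at this

end TripleMinors

/-- The linear span of all products of triples of complementary minors of the generic
`n × n` matrix has dimension equal to the number of `4321`-avoiding permutations. -/
theorem stmt_11 (n : ℕ) :
    Module.finrank ℚ ↥(Submodule.span ℚ (TripleMinorProducts n)) =
      Nat.card {w : Equiv.Perm (Fin n) // Avoids4321 w} := by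
  rw [← finrank_map_permCoeff span_tripleMinorProducts_le]
  have hlower := card_avoids4321_le_finrank (n := n)
  have hupper := finrank_add_card_hasIncreasingSubseq_le (n := n)
  have hcount := card_avoids4321_add_card_hasIncreasingSubseq (n := n)
  omega
end
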